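/- Let 1≤i≤m, α∈T, x,y∈V(Γᵢ(α)) and z∈V(Γ)∖V(Γᵢ(α)). Suppose (x,y)∈Γ_{1,p−1} with p>2, (y,z)∈Γ_{1,s−1} with s≥2, and (x,z)∈Γ_{2,2}. Then s=p and there exists a unique vertex y'∈P_{(1,p−1),(1,p−1)}(z,x), and this y' satisfies y'∉V(Γᵢ(α)). -/

import Mathlib

namespace Paper

/-- A digraph: a set of vertices together with a set of arcs (ordered pairs of
distinct vertices). -/
structure Digraph (V : Type*) where
  Adj : V → V → Prop
  loopless : ∀ v : V, ¬ Adj v v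

variable {V V' : Type*}

namespace Digraph

/-- There is a directed walk of length `n` from `x` to `y`. -/
def HasPath (G : Digraph V) (x y : V) (n : ℕ) : Prop :=
  ∃ f : ℕ → V, f 0 = x ∧ f n = y ∧ ∀ k < n, G.Adj (f k) (f (k + 1))

/-- The distance `∂(x,y)`: the length of a shortest directed path from `x` to `y`. -/
noncomputable def dist (G : Digraph V) (x y : V) : ℕ :=
  sInf {n | G.HasPath x y n}

/-- The two-way distance `∂̃(x,y) = (∂(x,y), ∂(y,x))`. -/
noncomputable def tdist (G : Digraph V) (x y : V) : ℕ × ℕ :=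
  (G.dist x y, G.dist y x)

/-- The two-way distance set `∂̃(Γ)`. -/
def tdSet (G : Digraph V) : Set (ℕ × ℕ) :=
  {p | ∃ x y : V, G.tdist x y = p}

def StronglyConnected (G : Digraph V) : Prop :=
  ∀ x y : V, ∃ n, G.HasPath x y n

/-- `P_{ĩ,j̃}(x,y)`: the set of `z` with `∂̃(x,z) = ĩ` and `∂̃(z,y) = j̃`. -/
def P (G : Digraph V) (i j : ℕ × ℕ) (x y : V) : Set V :=
  {z | G.tdist x z = i ∧ G.tdist z y = j}

open Classical in
/-- The intersection number `p^{h̃}_{ĩ,j̃}`, defined using an arbitrarily chosen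
pair at two-way distance `h̃` (and `0` if there is no such pair). -/
noncomputable def p (G : Digraph V) (h i j : ℕ × ℕ) : ℕ :=
  if hh : ∃ xy : V × V, G.tdist xy.1 xy.2 = h then
    Nat.card (G.P i j hh.choose.1 hh.choose.2)
  else 0

/-- A weakly distance-regular digraph: strongly connected, and
`|P_{ĩ,j̃}(x,y)|` depends only on `∂̃(x,y)`, `ĩ` and `j̃`. -/
def IsWDR (G : Digraph V) : Prop :=
  G.StronglyConnected ∧
    ∀ (i j : ℕ × ℕ) (x y : V), Nat.card (G.P i j x y) = G.p (G.tdist x y) i j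

/-- Commutativity: `p^{h̃}_{ĩ,j̃} = p^{h̃}_{j̃,ĩ}` for all `h̃,ĩ,j̃ ∈ ∂̃(Γ)`. -/
def IsCommutative (G : Digraph V) : Prop :=
  ∀ h i j : ℕ × ℕ, h ∈ G.tdSet → i ∈ G.tdSet → j ∈ G.tdSet → G.p h i j = G.p h j i

/-- `Γ` is an undirected graph, i.e. its arc set is symmetric. -/
def IsUndirected (G : Digraph V) : Prop :=
  ∀ x y : V, G.Adj x y → G.Adj y x

def IsSemicomplete (G : Digraph V) : Prop :=
  ∀ x y : V, x ≠ y → (G.Adj x y ∨ G.Adj y x)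

/-- `Γ` is a complete (undirected) graph. -/
def IsCompleteDigraph (G : Digraph V) : Prop :=
  ∀ x y : V, x ≠ y → (G.Adj x y ∧ G.Adj y x)

/-- The underlying graph of a digraph. -/
def underlying (G : Digraph V) : SimpleGraph V where
  Adj x y := G.Adj x y ∨ G.Adj y x
  symm := ⟨fun _ _ h => h.symm⟩
  loopless := ⟨fun x h => h.elim (G.loopless x) (G.loopless x)⟩

/-- The diameter: the maximum value of the distance function. -/
noncomputable def diameter (G : Digraph V) : ℕ :=
  sSup {n | ∃ x y : V, G.dist x y = n}

/-- The girth: the length of a shortest circuit. -/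
noncomputable def girth (G : Digraph V) : ℕ :=
  sInf {n | 0 < n ∧ ∃ x : V, G.HasPath x x n}

/-- Number of out-neighbours `d⁺(x)`. -/
noncomputable def outDeg (G : Digraph V) (x : V) : ℕ := Nat.card {y | G.Adj x y}

/-- Number of in-neighbours `d⁻(x)`. -/
noncomputable def inDeg (G : Digraph V) (x : V) : ℕ := Nat.card {y | G.Adj y x}

def IsIsomorphicTo (G : Digraph V) (G' : Digraph V') : Prop :=
  ∃ e : V ≃ V', ∀ x y : V, G.Adj x y ↔ G'.Adj (e x) (e y)

/-- The Cartesian product of two digraphs. -/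
def box (G : Digraph V) (G' : Digraph V') : Digraph (V × V') where
  Adj x y := (x.1 = y.1 ∧ G'.Adj x.2 y.2) ∨ (G.Adj x.1 y.1 ∧ x.2 = y.2)
  loopless := fun v h => h.elim (fun h' => G'.loopless v.2 h'.2) (fun h' => G.loopless v.1 h'.1)

/-- Two digraphs have the same intersection numbers. -/
def SameIntersectionNumbers (G : Digraph V) (G' : Digraph V') : Prop :=
  G.tdSet = G'.tdSet ∧
    ∀ h i j : ℕ × ℕ, h ∈ G.tdSet → i ∈ G.tdSet → j ∈ G.tdSet → G.p h i j = G'.p h i j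

/-- Induced subdigraph on a set of vertices. -/
def induce (G : Digraph V) (s : Set V) : Digraph s where
  Adj x y := G.Adj x.1 y.1
  loopless := fun v h => G.loopless v.1 h

end Digraph

/-- The Cartesian product of a family of digraphs. -/
def piBox {ι : Type*} {W : ι → Type*} (G : ∀ i, Digraph (W i)) : Digraph (∀ i, W i) where
  Adj x y := ∃ i, (G i).Adj (x i) (y i) ∧ ∀ j, j ≠ i → x j = y j
  loopless := by
    rintro v ⟨i, hi, -⟩
    exact (G i).loopless _ hi

/-- The Cayley digraph `Cay(A,S)` of an additive group (for `S ⊆ A ∖ {0}`). -/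
def Cay (A : Type*) [AddGroup A] (S : Set A) : Digraph A where
  Adj x y := x ≠ y ∧ y - x ∈ S
  loopless := fun _ h => h.1 rfl

/-- The Cayley graph of an additive group with respect to a symmetric connection set. -/
def cayleyGraph (A : Type*) [AddGroup A] (S : Set A) : SimpleGraph A where
  Adj x y := x ≠ y ∧ (y - x ∈ S ∨ x - y ∈ S)
  symm := ⟨fun _ _ h => ⟨h.1.symm, h.2.symm⟩⟩
  loopless := ⟨fun _ h => h.1 rfl⟩

/-- The Hamming graph `H(ι, S)`: vertices are tuples, adjacent iff they differ in
exactly one coordinate. -/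
def hammingGraph (ι : Type*) (S : Type*) : SimpleGraph (ι → S) where
  Adj x y := ∃ i, x i ≠ y i ∧ ∀ j, j ≠ i → x j = y j
  symm := by
    constructor
    rintro x y ⟨i, h1, h2⟩
    exact ⟨i, h1.symm, fun j hj => (h2 j hj).symm⟩
  loopless := by
    constructor
    rintro x ⟨i, h1, -⟩
    exact h1 rfl

/-- The folded `n`-cube: vertices are `(n-1)`-tuples over `ℤ₂`, adjacent iff they
differ in exactly one coordinate or in all `n-1` coordinates. -/
def foldedCube (n : ℕ) : SimpleGraph (Fin (n - 1) → ZMod 2) where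
  Adj x y := (∃ i, x i ≠ y i ∧ ∀ j, j ≠ i → x j = y j) ∨ (x ≠ y ∧ ∀ j, x j ≠ y j)
  symm := by
    constructor
    rintro x y (⟨i, h1, h2⟩ | ⟨h1, h2⟩)
    · exact Or.inl ⟨i, h1.symm, fun j hj => (h2 j hj).symm⟩
    · exact Or.inr ⟨h1.symm, fun j => (h2 j).symm⟩
  loopless := by
    constructor
    rintro x (⟨i, h1, -⟩ | ⟨h1, -⟩)
    · exact h1 rfl
    · exact h1 rfl

/-- The Cartesian product of a family of simple graphs. -/
def piBoxGraph {ι : Type*} {W : ι → Type*} (G : ∀ i, SimpleGraph (W i)) :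
    SimpleGraph (∀ i, W i) where
  Adj x y := ∃ i, (G i).Adj (x i) (y i) ∧ ∀ j, j ≠ i → x j = y j
  symm := by
    constructor
    rintro x y ⟨i, h1, h2⟩
    exact ⟨i, (G i).adj_symm h1, fun j hj => (h2 j hj).symm⟩
  loopless := by
    constructor
    rintro x ⟨i, h1, -⟩
    exact (G i).irrefl h1

/-- The Shrikhande graph `Cay(ℤ₄ × ℤ₄, {±(1,0), ±(0,1), ±(1,1)})`. -/
def shrikhande : SimpleGraph (ZMod 4 × ZMod 4) :=
  cayleyGraph (ZMod 4 × ZMod 4) {(1, 0), (-1, 0), (0, 1), (0, -1), (1, 1), (-1, -1)}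

/-- The Doob graph `G(d₁, d₂)`: the Cartesian product of `d₁` copies of the
Shrikhande graph with the Hamming graph `H(d₂, 4)`. -/
def doobGraph (d₁ d₂ : ℕ) :
    SimpleGraph ((Fin d₁ → ZMod 4 × ZMod 4) × (Fin d₂ → ZMod 4)) :=
  (piBoxGraph fun _ : Fin d₁ => shrikhande).boxProd (hammingGraph (Fin d₂) (ZMod 4))

/-- `c_i(x,y)`: the number of neighbours of `y` at distance `i - 1` from `x`. -/
noncomputable def cNum (G : SimpleGraph V) (i : ℕ) (x y : V) : ℕ :=
  Nat.card {z : V | G.Adj y z ∧ G.dist x z = i - 1}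

/-- `a_i(x,y)`: the number of neighbours of `y` at distance `i` from `x`. -/
noncomputable def aNum (G : SimpleGraph V) (i : ℕ) (x y : V) : ℕ :=
  Nat.card {z : V | G.Adj y z ∧ G.dist x z = i}

/-- `b_i(x,y)`: the number of neighbours of `y` at distance `i + 1` from `x`. -/
noncomputable def bNum (G : SimpleGraph V) (i : ℕ) (x y : V) : ℕ :=
  Nat.card {z : V | G.Adj y z ∧ G.dist x z = i + 1}

/-- A distance-regular graph. -/
def IsDRG (G : SimpleGraph V) : Prop :=
  G.Connected ∧
    ∀ (i : ℕ) (x y x' y' : V), G.dist x y = i → G.dist x' y' = i →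
      cNum G i x y = cNum G i x' y' ∧ bNum G i x y = bNum G i x' y'

/-- A distance-transitive graph. -/
def IsDistanceTransitive (G : SimpleGraph V) : Prop :=
  G.Connected ∧
    ∀ x y x' y' : V, G.dist x y = G.dist x' y' → ∃ σ : G ≃g G, σ x = x' ∧ σ y = y'

/-- The vertex set of `Γ_i(α)`: all tuples obtained from `α` by inserting an
arbitrary element of `S` in the `i`-th coordinate. -/
def lineSet {n : ℕ} {S : Type*} (i : Fin (n + 1)) (α : Fin n → S) : Set (Fin (n + 1) → S) :=
  Set.range fun b : S => i.insertNth b α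

/-- The induced subdigraph `Γ_i(α)`. -/
def Digraph.line {n : ℕ} {S : Type*} (Γ : Digraph (Fin (n + 1) → S)) (i : Fin (n + 1))
    (α : Fin n → S) : Digraph (lineSet i α) :=
  Γ.induce (lineSet i α)

/-- Pad a tuple of length `m` with the entry `o` to a tuple of length `d`. -/
def pad {S : Type*} (o : S) (d m : ℕ) (α : Fin m → S) : Fin d → S :=
  fun j => if h : j.1 < m then α ⟨j.1, h⟩ else o

/-- The digraph `Γ^{[m]}` on `S^m`: `(α,β)` is an arc iff the padded tuples form
an arc of `Γ`. -/
def Digraph.trunc {S : Type*} {d : ℕ} (Γ : Digraph (Fin d → S)) (o : S) (m : ℕ) :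
    Digraph (Fin m → S) where
  Adj α β := Γ.Adj (pad o d m α) (pad o d m β)
  loopless := fun _ h => Γ.loopless _ h

/-- The digraph `Γ^i` on `S`: `(a,b)` is an arc iff the tuples with `a` resp. `b`
in the `i`-th coordinate and `o` elsewhere form an arc of `Γ`. -/
def Digraph.coordDigraph {S : Type*} {d : ℕ} (Γ : Digraph (Fin d → S)) (o : S) (i : Fin d) :
    Digraph S where
  Adj a b := Γ.Adj (Function.update (fun _ => o) i a) (Function.update (fun _ => o) i b)
  loopless := fun _ h => Γ.loopless _ h

/-- The set `T = S^{m-1} × {(o,…,o)}` (as a subset of `S^{d-1}`, here `d = n+1`). -/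
def Tset {n : ℕ} (S : Type*) (o : S) (m : ℕ) : Set (Fin n → S) :=
  {α | ∀ j : Fin n, m - 1 ≤ j.1 → α j = o}

end Paper

/-!
In the underlying graph `Σ` the vertices `x` and `z` are at distance `2`, so by `c₂ = 2` their
common neighbours are exactly `y` and the middle vertex `u` of a path `z → u → x`. Hence `y` is the
only vertex of `P_{(1,p-1),(1,s-1)}(x,z)`; commutativity gives `|P_{(1,s-1),(1,p-1)}(x,z)| = 1`,
and its vertex can again only be `y`, which forces `s = p`. Weak distance-regularity transfers
`|P_{(1,p-1),(1,p-1)}(x,z)| = 1` to the pair `(z,x)`. Finally `Γᵢ(α)` is a clique of size `q` in `Σ`,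
so if `y'` lay in it, the edge `yy'` would have the `q - 2` other clique vertices and `z` as common neighbours, contradicting `a₁ = q - 2`.
-/

theorem Set.eq_pair_of_ncard_eq_two {α : Type*} {s : Set α} {a b : α} (hs : s.ncard = 2)
    (hab : a ≠ b) (ha : a ∈ s) (hb : b ∈ s) : s = {a, b} :=
  (Set.eq_of_subset_of_ncard_le (Set.pair_subset ha hb) (by rw [hs, Set.ncard_pair hab])
    (Set.finite_of_ncard_ne_zero (by omega))).symm

namespace SimpleGraph

variable {V : Type*} {G : SimpleGraph V} {x y z : V}

theorem dist_eq_two_of_mem_commonNeighbors (hxz : x ≠ z) (hadj : ¬G.Adj x z)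
    (hy : y ∈ G.commonNeighbors x z) : G.dist x z = 2 := by
  rw [dist, ENat.toNat_eq_iff two_ne_zero, Nat.cast_ofNat, edist_eq_two_iff]
  exact ⟨hxz, hadj, y, hy⟩

theorem cNum_two_eq_card_commonNeighbors (G : SimpleGraph V) (x z : V) :
    Paper.cNum G 2 x z = Nat.card (G.commonNeighbors x z) := by
  simp only [Paper.cNum, Nat.add_one_sub_one, dist_eq_one_iff_adj, commonNeighbors,
    Set.inter_def, mem_neighborSet, and_comm]

theorem aNum_one_eq_card_commonNeighbors (G : SimpleGraph V) (x y : V) :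
    Paper.aNum G 1 x y = Nat.card (G.commonNeighbors x y) := by
  simp only [Paper.aNum, dist_eq_one_iff_adj, commonNeighbors, Set.inter_def, mem_neighborSet,
    and_comm]

theorem ncard_sub_one_le_card_commonNeighbors [Finite V] {K : Set V} {y' : V}
    (hK : G.IsClique K) (hy : y ∈ K) (hy' : y' ∈ K) (hne : y ≠ y') (hz : z ∉ K)
    (hzc : z ∈ G.commonNeighbors y y') : K.ncard - 1 ≤ Nat.card (G.commonNeighbors y y') := by
  have hsub : insert z (K \ {y, y'}) ⊆ G.commonNeighbors y y' := by
    rintro w (rfl | ⟨hwK, hwyy'⟩)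
    · exact hzc
    · simp only [Set.mem_insert_iff, Set.mem_singleton_iff, not_or] at hwyy'
      exact ⟨hK hy hwK (Ne.symm hwyy'.1), hK hy' hwK (Ne.symm hwyy'.2)⟩
  have hcard : (insert z (K \ {y, y'})).ncard = K.ncard - 2 + 1 := by
    rw [Set.ncard_insert_of_notMem fun h => hz h.1, Set.ncard_sdiff (Set.pair_subset hy hy'),
      Set.ncard_pair hne]
  have h2 : 2 ≤ K.ncard := Set.ncard_pair hne ▸ Set.ncard_le_ncard (Set.pair_subset hy hy')
  have := Set.ncard_le_ncard hsub
  rw [Nat.card_coe_set_eq]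
  omega

theorem notMem_of_isClique_of_aNum [Finite V] {K : Set V} {y' : V} (hK : G.IsClique K)
    (ha1 : ∀ u v, G.dist u v = 1 → Paper.aNum G 1 u v = K.ncard - 2) (hy : y ∈ K) (hz : z ∉ K)
    (hyz : G.Adj y z) (hy'z : G.Adj y' z) (hne : y ≠ y') : y' ∉ K := by
  intro hy'
  have hle := ncard_sub_one_le_card_commonNeighbors hK hy hy' hne hz ⟨hyz, hy'z⟩
  have h2 : 2 ≤ K.ncard := Set.ncard_pair hne ▸ Set.ncard_le_ncard (Set.pair_subset hy hy')
  rw [← aNum_one_eq_card_commonNeighbors, ha1 y y' (dist_eq_one_iff_adj.mpr (hK hy hy' hne))]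
    at hle
  omega

end SimpleGraph

namespace Paper

namespace Digraph

variable {V : Type*} {G : Digraph V} {x y z : V}

theorem hasPath_one_iff : G.HasPath x y 1 ↔ G.Adj x y := by
  constructor
  · rintro ⟨f, rfl, rfl, hf⟩
    exact hf 0 one_pos
  · intro h
    refine ⟨fun k => if k = 0 then x else y, rfl, rfl, fun k hk => ?_⟩
    obtain rfl : k = 0 := Nat.lt_one_iff.mp hk
    exact h

theorem dist_self (x : V) : G.dist x x = 0 :=
  Nat.sInf_eq_zero.mpr (Or.inl ⟨fun _ => x, rfl, rfl, fun _ hk => absurd hk (Nat.not_lt_zero _)⟩)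

theorem dist_eq_one_iff : G.dist x y = 1 ↔ G.Adj x y := by
  constructor
  · intro h
    have hpath : G.HasPath x y (G.dist x y) := Nat.sInf_mem (Nat.nonempty_of_pos_sInf (h ▸ one_pos))
    exact hasPath_one_iff.mp (h ▸ hpath)
  · intro h
    have hle : G.dist x y ≤ 1 := Nat.sInf_le (hasPath_one_iff.mpr h)
    have hne : G.dist x y ≠ 0 := by
      intro h0
      rcases Nat.sInf_eq_zero.mp h0 with ⟨f, hf0, hf1, -⟩ | hempty
      · obtain rfl : x = y := hf0.symm.trans hf1
        exact G.loopless x h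
      · exact hempty.symm ▸ Set.notMem_empty 1 <| hasPath_one_iff.mpr h
    omega

theorem exists_adj_adj_of_dist_eq_two (h : G.dist x y = 2) : ∃ w, G.Adj x w ∧ G.Adj w y := by
  obtain ⟨f, rfl, rfl, hf⟩ : G.HasPath x y 2 :=
    h ▸ Nat.sInf_mem (Nat.nonempty_of_pos_sInf (h ▸ two_pos))
  exact ⟨f 1, hf 0 two_pos, hf 1 one_lt_two⟩

theorem tdist_eq_iff {a b : ℕ} : G.tdist x y = (a, b) ↔ G.dist x y = a ∧ G.dist y x = b :=
  Prod.ext_iff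

theorem tdist_swap (x y : V) : G.tdist y x = (G.tdist x y).swap := rfl

theorem IsWDR.card_P_congr (hG : G.IsWDR) {x' y' : V} (h : G.tdist x y = G.tdist x' y')
    (i j : ℕ × ℕ) : Nat.card (G.P i j x y) = Nat.card (G.P i j x' y') := by
  rw [hG.2, hG.2, h]

theorem IsCommutative.card_P_swap (hc : G.IsCommutative) (hG : G.IsWDR) {i j : ℕ × ℕ}
    (hi : i ∈ G.tdSet) (hj : j ∈ G.tdSet) (x y : V) :
    Nat.card (G.P i j x y) = Nat.card (G.P j i x y) := by
  rw [hG.2, hG.2, hc _ _ _ ⟨x, y, rfl⟩ hi hj]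

theorem underlying_dist_eq_two (hxz : G.tdist x z = (2, 2)) (hxy : G.Adj x y)
    (hyz : G.Adj y z) : G.underlying.dist x z = 2 := by
  obtain ⟨hxz, hzx⟩ := tdist_eq_iff.mp hxz
  refine SimpleGraph.dist_eq_two_of_mem_commonNeighbors ?_ ?_ (y := y) ⟨Or.inl hxy, Or.inr hyz⟩
  · rintro rfl
    rw [dist_self] at hxz
    omega
  · rintro (h | h) <;> have := dist_eq_one_iff.mpr h <;> omega

/-- By `c₂ = 2`, the only common neighbour of `x` and `z` in `Σ` besides `y` is the middle vertex
of a path `z → u → x`, which has two-way distances `(1,1)` from `x` and to `z`. -/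
theorem P_subset_singleton (hc2 : ∀ u v, G.underlying.dist u v = 2 → cNum G.underlying 2 u v = 2)
    (hxz : G.tdist x z = (2, 2)) (hxy : G.Adj x y) (hyz : G.Adj y z) (hyx : ¬G.Adj y x)
    {a b : ℕ} (hab : a ≠ 1 ∨ b ≠ 1) : G.P (1, a) (1, b) x z ⊆ {y} := by
  rintro w ⟨hxw, hwz⟩
  obtain ⟨u, hzu, hux⟩ := exists_adj_adj_of_dist_eq_two (tdist_eq_iff.mp hxz).2
  have hcard := hc2 x z (underlying_dist_eq_two hxz hxy hyz)
  rw [SimpleGraph.cNum_two_eq_card_commonNeighbors, Nat.card_coe_set_eq] at hcard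
  have hpair := Set.eq_pair_of_ncard_eq_two hcard (a := y) (b := u) (by rintro rfl; exact hyx hux)
    ⟨Or.inl hxy, Or.inr hyz⟩ ⟨Or.inr hux, Or.inl hzu⟩
  obtain ⟨hxw, hwx⟩ := tdist_eq_iff.mp hxw
  obtain ⟨hwz, hzw⟩ := tdist_eq_iff.mp hwz
  have hw : w ∈ G.underlying.commonNeighbors x z :=
    ⟨Or.inl (dist_eq_one_iff.mp hxw), Or.inr (dist_eq_one_iff.mp hwz)⟩
  rcases hpair ▸ hw with rfl | rfl
  · rfl
  · have := dist_eq_one_iff.mpr hux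
    have := dist_eq_one_iff.mpr hzu
    omega

theorem eq_and_existsUnique_mem_P (hwdr : G.IsWDR) (hcomm : G.IsCommutative)
    (hc2 : ∀ u v, G.underlying.dist u v = 2 → cNum G.underlying 2 u v = 2)
    {p s : ℕ} (hp2 : 2 < p) (hxy : G.tdist x y = (1, p - 1))
    (hyz : G.tdist y z = (1, s - 1)) (hxz : G.tdist x z = (2, 2)) :
    s = p ∧ ∃! y', y' ∈ G.P (1, p - 1) (1, p - 1) z x := by
  obtain ⟨hxy1, hyx⟩ := tdist_eq_iff.mp hxy
  have axy := dist_eq_one_iff.mp hxy1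
  have ayz := dist_eq_one_iff.mp (tdist_eq_iff.mp hyz).1
  have nyx : ¬G.Adj y x := fun h => by have := dist_eq_one_iff.mpr h; omega
  have hsub := fun {a b : ℕ} (hab : a ≠ 1 ∨ b ≠ 1) =>
    P_subset_singleton hc2 hxz axy ayz nyx hab
  have hp1 : p - 1 ≠ 1 := by omega
  have hP : G.P (1, p - 1) (1, s - 1) x z = {y} :=
    (hsub (Or.inl hp1)).antisymm (Set.singleton_subset_iff.mpr ⟨hxy, hyz⟩)
  have hcard : (G.P (1, s - 1) (1, p - 1) x z).ncard = 1 := by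
    rw [← Nat.card_coe_set_eq, ← hcomm.card_P_swap hwdr ⟨x, y, hxy⟩ ⟨y, z, hyz⟩, hP,
      Nat.card_unique]
  obtain ⟨w, hw⟩ := Set.ncard_eq_one.mp hcard
  have hwy : w = y := hsub (Or.inr hp1) (hw ▸ Set.mem_singleton w)
  have hyP : y ∈ G.P (1, s - 1) (1, p - 1) x z := by
    rw [hw, ← hwy]
    rfl
  have hsp : s = p := by
    have := (tdist_eq_iff.mp hyP.1).2
    omega
  subst hsp
  have hcard' : (G.P (1, s - 1) (1, s - 1) z x).ncard = 1 := by
    rw [← Nat.card_coe_set_eq, hwdr.card_P_congr (by rw [tdist_swap, hxz]; rfl) _ _ (x' := x)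
      (y' := z), hP, Nat.card_unique]
  obtain ⟨y', hy'⟩ := Set.ncard_eq_one.mp hcard'
  refine ⟨rfl, y', by rw [hy']; rfl, fun w hw => ?_⟩
  rwa [hy'] at hw

end Digraph

variable {S : Type*} {n : ℕ}

theorem mem_lineSet_iff {i : Fin (n + 1)} {α : Fin n → S} {v : Fin (n + 1) → S} :
    v ∈ lineSet i α ↔ i.removeNth v = α := by
  constructor
  · rintro ⟨b, rfl⟩
    exact Fin.removeNth_insertNth (α := fun _ => S) i b α
  · rintro rfl
    exact ⟨v i, Fin.insertNth_self_removeNth i v⟩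

theorem ncard_lineSet (i : Fin (n + 1)) (α : Fin n → S) : (lineSet i α).ncard = Nat.card S := by
  rw [lineSet, ← Nat.card_coe_set_eq, Nat.card_range_of_injective]
  intro a b h
  simpa using congrFun h i

theorem apply_eq_of_mem_lineSet {o : S} {m : ℕ} {i : Fin (n + 1)} {α : Fin n → S}
    (hα : α ∈ Tset S o m) (hi : i.1 < m) {v : Fin (n + 1) → S} (hv : v ∈ lineSet i α)
    {j : Fin (n + 1)} (hj : m ≤ j.1) : v j = o := by
  obtain ⟨k, rfl⟩ := Fin.exists_succAbove_eq (show j ≠ i by rintro rfl; omega)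
  have hk : m - 1 ≤ k.1 := by
    rcases lt_or_ge k.castSucc i with h | h
    · rw [Fin.succAbove_of_castSucc_lt _ _ h] at hj
      rw [Fin.lt_def, Fin.val_castSucc] at h
      rw [Fin.val_castSucc] at hj
      omega
    · rw [Fin.succAbove_of_le_castSucc _ _ h, Fin.val_succ] at hj
      omega
  rw [← hα k hk, ← mem_lineSet_iff.mp hv]
  rfl

theorem pad_comp_castLE {o : S} {d m : ℕ} (hmd : m ≤ d) {v : Fin d → S}
    (hv : ∀ j : Fin d, m ≤ j.1 → v j = o) : pad o d m (v ∘ Fin.castLE hmd) = v := by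
  funext j
  by_cases hj : j.1 < m
  · simp [pad, hj]
  · simp [pad, hj, hv j (not_lt.mp hj)]

/-- `Γᵢ(α)` is the padding of a line of the Hamming graph `Σ(Γ^{[m]})`, hence a clique of `Σ`. -/
theorem isClique_lineSet {Γ : Digraph (Fin (n + 1) → S)} {o : S} {m : ℕ} (hmd : m ≤ n + 1)
    (hham : (Γ.trunc o m).underlying = hammingGraph (Fin m) S) {i : Fin (n + 1)} (hi : i.1 < m)
    {α : Fin n → S} (hα : α ∈ Tset S o m) : Γ.underlying.IsClique (lineSet i α) := by
  intro u hu v hv huv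
  have hui : u i ≠ v i := by
    intro h
    rw [← Fin.insertNth_self_removeNth i u, ← Fin.insertNth_self_removeNth i v, h,
      mem_lineSet_iff.mp hu, mem_lineSet_iff.mp hv] at huv
    exact huv rfl
  have hrest : (hammingGraph (Fin m) S).Adj (u ∘ Fin.castLE hmd) (v ∘ Fin.castLE hmd) := by
    refine ⟨⟨i.1, hi⟩, hui, fun j hj => ?_⟩
    obtain ⟨k, hk⟩ := Fin.exists_succAbove_eq (x := Fin.castLE hmd j) (y := i)
      fun h => hj (Fin.ext (Fin.val_eq_of_eq h :))
    simp only [Function.comp_apply, ← hk]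
    exact congrFun ((mem_lineSet_iff.mp hu).trans (mem_lineSet_iff.mp hv).symm) k
  rw [← hham] at hrest
  simpa only [Digraph.underlying, Digraph.trunc,
    pad_comp_castLE hmd fun _ => apply_eq_of_mem_lineSet hα hi hu,
    pad_comp_castLE hmd fun _ => apply_eq_of_mem_lineSet hα hi hv] using hrest

end Paper

open Paper in
theorem lemma_degree_three_general {S : Type*} [Finite S] {n : ℕ}
    (Γ : Paper.Digraph (Fin (n + 1) → S)) (q : ℕ) (hq : q = Nat.card S)
    (hwdr : Γ.IsWDR) (hcomm : Γ.IsCommutative)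
    (ha1 : ∀ x y, Γ.underlying.dist x y = 1 → aNum Γ.underlying 1 x y = q - 2)
    (hc2 : ∀ x y, Γ.underlying.dist x y = 2 → cNum Γ.underlying 2 x y = 2)
    (o : S) (m : ℕ) (hmd : m ≤ n + 1)
    (hham : (Γ.trunc o m).underlying = hammingGraph (Fin m) S)
    (i : Fin (n + 1)) (hi : i.1 < m)
    (α : Fin n → S) (hα : α ∈ Tset S o m)
    (x y z : Fin (n + 1) → S) (hy : y ∈ lineSet i α)
    (hz : z ∉ lineSet i α)
    (p s : ℕ) (hp2 : 2 < p)
    (hxy : Γ.tdist x y = (1, p - 1)) (hyz : Γ.tdist y z = (1, s - 1))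
    (hxz : Γ.tdist x z = (2, 2)) :
    s = p ∧ (∃! y', y' ∈ Γ.P (1, p - 1) (1, p - 1) z x) ∧
      ∀ y' ∈ Γ.P (1, p - 1) (1, p - 1) z x, y' ∉ lineSet i α := by
  obtain ⟨rfl, huniq⟩ := Digraph.eq_and_existsUnique_mem_P hwdr hcomm hc2 hp2 hxy hyz hxz
  refine ⟨rfl, huniq, fun y' ⟨hzy', hy'x⟩ => ?_⟩
  have hyx : Γ.dist y x = s - 1 := (Digraph.tdist_eq_iff.mp hxy).2
  have hy'x : Γ.dist y' x = 1 := (Digraph.tdist_eq_iff.mp hy'x).1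
  refine SimpleGraph.notMem_of_isClique_of_aNum (isClique_lineSet hmd hham hi hα)
    (by rwa [ncard_lineSet, ← hq]) hy hz
    (Or.inl (Digraph.dist_eq_one_iff.mp (Digraph.tdist_eq_iff.mp hyz).1))
    (Or.inr (Digraph.dist_eq_one_iff.mp (Digraph.tdist_eq_iff.mp hzy').1)) ?_
  rintro rfl
  omega

open Paper in
/-- **Lemma 3.9.** Let `x,y ∈ V(Γᵢ(α))` and `z ∉ V(Γᵢ(α))` with
`(x,y) ∈ Γ_{1,p−1}` (`p > 2`), `(y,z) ∈ Γ_{1,s−1}` (`s ≥ 2`) and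
`(x,z) ∈ Γ_{2,2}`. Then `s = p` and there is a unique
`y' ∈ P_{(1,p−1),(1,p−1)}(z,x)`, which lies outside `Γᵢ(α)`. -/
theorem lemma_degree_three {S : Type*} [Finite S] {n : ℕ}
    (Γ : Paper.Digraph (Fin (n + 1) → S)) (q : ℕ) (hq : q = Nat.card S)
    (hwdr : Γ.IsWDR) (hcomm : Γ.IsCommutative)
    (hdrg : IsDRG Γ.underlying)
    (ha1 : ∀ x y, Γ.underlying.dist x y = 1 → aNum Γ.underlying 1 x y = q - 2)
    (hc2 : ∀ x y, Γ.underlying.dist x y = 2 → cNum Γ.underlying 2 x y = 2)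
    (o : S) (m : ℕ) (hm1 : 1 ≤ m) (hmd : m ≤ n + 1)
    (hham : (Γ.trunc o m).underlying = hammingGraph (Fin m) S)
    (i : Fin (n + 1)) (hi : i.1 < m)
    (α : Fin n → S) (hα : α ∈ Tset S o m)
    (x y z : Fin (n + 1) → S) (hx : x ∈ lineSet i α) (hy : y ∈ lineSet i α)
    (hz : z ∉ lineSet i α)
    (p s : ℕ) (hp2 : 2 < p) (hs2 : 2 ≤ s)
    (hxy : Γ.tdist x y = (1, p - 1)) (hyz : Γ.tdist y z = (1, s - 1))
    (hxz : Γ.tdist x z = (2, 2)) :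
    s = p ∧ (∃! y', y' ∈ Γ.P (1, p - 1) (1, p - 1) z x) ∧
      ∀ y' ∈ Γ.P (1, p - 1) (1, p - 1) z x, y' ∉ lineSet i α :=
  lemma_degree_three_general Γ q hq hwdr hcomm ha1 hc2 o m hmd hham i hi α hα x y z hy hz p s hp2
    hxy hyz hxz
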